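/- In the model structure on Flow with cofibration class cof(I^gl ∪ {C}) and weak equivalence class W̄_DK: a flow X is fibrant if and only if either PX = ∅ (X is a set) or for every pair of states (α,β) the space P_{α,β}X is nonempty and every continuous map S^{n-1} → P_{α,β}X (n ≥ 1) extends over D^n (i.e. the map P_{α,β}X → {∗} is a trivial q-fibration); in particular not all flows are fibrant. Moreover the cofibrant objects are exactly the q-cofibrant flows, i.e. the flows X for which ∅ → X belongs to cof(I^gl ∪ {C, R}). -/

import Mathlib

open CategoryTheory

noncomputable section

/-! ### Flows: small semicategories enriched in topological spaces -/

structure DFlow : Type 1 where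
  States : Type
  Path : States → States → Type
  str : ∀ α β, TopologicalSpace (Path α β)
  comp : ∀ {α β γ : States}, Path α β → Path β γ → Path α γ
  continuous_comp : ∀ α β γ, Continuous (fun p : Path α β × Path β γ => comp p.1 p.2)
  assoc : ∀ {α β γ δ : States} (x : Path α β) (y : Path β γ) (z : Path γ δ),
    comp (comp x y) z = comp x (comp y z)

attribute [instance] DFlow.str

/-- Morphisms of flows. -/
structure FlowHom (X Y : DFlow) where
  toFun : X.States → Y.States
  map : ∀ {α β : X.States}, X.Path α β → Y.Path (toFun α) (toFun β)
  continuous_map : ∀ α β : X.States, Continuous fun p : X.Path α β => map p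
  map_comp : ∀ {α β γ : X.States} (x : X.Path α β) (y : X.Path β γ),
    map (X.comp x y) = Y.comp (map x) (map y)

instance : Category DFlow where
  Hom := FlowHom
  id X := ⟨id, fun p => p, fun _ _ => continuous_id, fun _ _ => rfl⟩
  comp f g := ⟨g.toFun ∘ f.toFun, fun p => g.map (f.map p),
    fun α β => (g.continuous_map _ _).comp (f.continuous_map _ _),
    fun x y => by simp only [f.map_comp, g.map_comp]⟩

lemma continuous_of_isEmpty {X Y : Type} [TopologicalSpace X] [TopologicalSpace Y]
    (h : IsEmpty X) (f : X → Y) : Continuous f :=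
  continuous_iff_continuousAt.mpr fun x => h.elim x

/-- A set viewed as a flow with empty spaces of execution paths. -/
def DFlow.ofSet (S : Type) : DFlow where
  States := S
  Path _ _ := Empty
  str _ _ := ⊥
  comp x _ := x.elim
  continuous_comp _ _ _ := continuous_of_isEmpty (inferInstanceAs (IsEmpty (Empty × Empty))) _
  assoc x _ _ := x.elim

/-- The empty flow. -/
def emptyFlow : DFlow := DFlow.ofSet Empty

/-- The flow `{0}` with one state and no execution path. -/
def pointFlow : DFlow := DFlow.ofSet PUnit

/-- The flow `{0, 1}` with two states and no execution path. -/
def twoFlow : DFlow := DFlow.ofSet Bool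

/-- The terminal flow. -/
def terminalFlow : DFlow where
  States := PUnit
  Path _ _ := PUnit
  str _ _ := ⊥
  comp _ _ := PUnit.unit
  continuous_comp _ _ _ := continuous_const
  assoc _ _ _ := rfl

/-- The map of flows `C : ∅ → {0}`. -/
def Cmap : emptyFlow ⟶ pointFlow :=
  ⟨fun x => x.elim, fun {α} _ _ => α.elim, fun α _ => α.elim, fun {α} _ _ _ _ => α.elim⟩

/-- The map of flows `R : {0,1} → {0}`. -/
def Rmap : twoFlow ⟶ pointFlow :=
  ⟨fun _ => PUnit.unit, fun p => p.elim, fun _ _ => @continuous_of_isEmpty _ _ (DFlow.str _ _ _) (DFlow.str _ _ _) (inferInstanceAs (IsEmpty Empty)) _, fun x _ => x.elim⟩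

/-- The map of flows `C⁺ : {0} → {0,1}`. -/
def Cplus : pointFlow ⟶ twoFlow :=
  ⟨fun _ => false, fun p => p.elim, fun _ _ => @continuous_of_isEmpty _ _ (DFlow.str _ _ _) (DFlow.str _ _ _) (inferInstanceAs (IsEmpty Empty)) _, fun x _ => x.elim⟩

/-- The canonical map from the empty flow. -/
def DFlow.fromEmpty (X : DFlow) : emptyFlow ⟶ X :=
  ⟨fun x => x.elim, fun {α} _ => α.elim, fun α _ => α.elim, fun {α} _ _ _ _ => α.elim⟩

/-- The canonical map to the terminal flow. -/
def DFlow.toTerminal (X : DFlow) : X ⟶ terminalFlow :=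
  ⟨fun _ => PUnit.unit, fun _ => PUnit.unit, fun _ _ => @continuous_const _ _ (X.str _ _) (terminalFlow.str _ _) PUnit.unit, fun _ _ => rfl⟩

/-! ### Globes -/

/-- The path spaces of the globe `Glob(Z)`. -/
def GlobPath (Z : Type) : Bool → Bool → Type
  | false, true => Z
  | _, _ => Empty

instance globPathTop (Z : Type) [TopologicalSpace Z] :
    ∀ a b, TopologicalSpace (GlobPath Z a b)
  | false, true => inferInstanceAs (TopologicalSpace Z)
  | false, false => ⊥
  | true, false => ⊥
  | true, true => ⊥

instance globPathIsEmpty (Z : Type) : ∀ (a : Bool), IsEmpty (GlobPath Z a a)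
  | false => inferInstanceAs (IsEmpty Empty)
  | true => inferInstanceAs (IsEmpty Empty)

/-- The globe of a topological space. -/
def DFlow.glob (Z : Type) [TopologicalSpace Z] : DFlow where
  States := Bool
  Path := GlobPath Z
  str := globPathTop Z
  comp {a b c} x y :=
    match a, b, c, x, y with
    | false, false, _, x, _ => x.elim
    | false, true, false, _, y => y.elim
    | false, true, true, _, y => y.elim
    | true, false, _, x, _ => x.elim
    | true, true, _, x, _ => x.elim
  continuous_comp a b c :=
    match a, b, c with
    | false, false, false => continuous_of_isEmpty ⟨fun p => p.1.elim⟩ _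
    | false, false, true => continuous_of_isEmpty ⟨fun p => p.1.elim⟩ _
    | false, true, false => continuous_of_isEmpty ⟨fun p => p.2.elim⟩ _
    | false, true, true => continuous_of_isEmpty ⟨fun p => p.2.elim⟩ _
    | true, false, false => continuous_of_isEmpty ⟨fun p => p.1.elim⟩ _
    | true, false, true => continuous_of_isEmpty ⟨fun p => p.1.elim⟩ _
    | true, true, false => continuous_of_isEmpty ⟨fun p => p.1.elim⟩ _
    | true, true, true => continuous_of_isEmpty ⟨fun p => p.1.elim⟩ _
  assoc {a b c d} x y z :=
    match a, b, c, d, x, y, z with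
    | false, false, _, _, x, _, _ => x.elim
    | false, true, false, _, _, y, _ => y.elim
    | false, true, true, false, _, y, _ => y.elim
    | false, true, true, true, _, y, _ => y.elim
    | true, _, _, _, x, _, _ => x.elim

/-- The functorial action of `Glob` on a continuous map. -/
def DFlow.globMap {Z W : Type} [TopologicalSpace Z] [TopologicalSpace W] (f : Z → W)
    (hf : Continuous f) : DFlow.glob Z ⟶ DFlow.glob W where
  toFun := id
  map {a b} x :=
    match a, b, x with
    | false, true, x => f x
    | false, false, x => x.elim
    | true, false, x => x.elim
    | true, true, x => x.elim
  continuous_map a b :=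
    match a, b with
    | false, true => hf
    | false, false => @continuous_of_isEmpty _ _ (DFlow.str _ _ _) (DFlow.str _ _ _) (inferInstanceAs (IsEmpty Empty)) _
    | true, false => @continuous_of_isEmpty _ _ (DFlow.str _ _ _) (DFlow.str _ _ _) (inferInstanceAs (IsEmpty Empty)) _
    | true, true => @continuous_of_isEmpty _ _ (DFlow.str _ _ _) (DFlow.str _ _ _) (inferInstanceAs (IsEmpty Empty)) _
  map_comp {a b c} x y :=
    match a, b, c, x, y with
    | false, false, _, x, _ => x.elim
    | false, true, false, _, y => y.elim
    | false, true, true, _, y => y.elim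
    | true, _, _, x, _ => x.elim

/-- The directed segment, the globe of a one-point space. -/
def Iseg : DFlow := DFlow.glob PUnit

/-! ### Disks and spheres -/

/-- The `n`-dimensional disk `D^n`. -/
def gDisk (n : ℕ) : Type := (Metric.closedBall (0 : EuclideanSpace ℝ (Fin n)) 1 : Set _)

/-- The sphere `S^{n-1}`, boundary of the `n`-dimensional disk. -/
def gSphere (n : ℕ) : Type := (Metric.sphere (0 : EuclideanSpace ℝ (Fin n)) 1 : Set _)

instance (n : ℕ) : TopologicalSpace (gDisk n) :=
  inferInstanceAs (TopologicalSpace (Metric.closedBall (0 : EuclideanSpace ℝ (Fin n)) 1))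

instance (n : ℕ) : TopologicalSpace (gSphere n) :=
  inferInstanceAs (TopologicalSpace (Metric.sphere (0 : EuclideanSpace ℝ (Fin n)) 1))

/-- The inclusion `S^{n-1} ⊆ D^n`. -/
def sphereIncl (n : ℕ) : gSphere n → gDisk n :=
  fun x => ⟨x.1, Metric.sphere_subset_closedBall x.2⟩

lemma continuous_sphereIncl (n : ℕ) : Continuous (sphereIncl n) :=
  Continuous.subtype_mk continuous_subtype_val _

/-- The generating cofibration `c_n : Glob(S^{n-1}) → Glob(D^n)`. -/
def cFlow (n : ℕ) : DFlow.glob (gSphere n) ⟶ DFlow.glob (gDisk n) :=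
  DFlow.globMap (sphereIncl n) (continuous_sphereIncl n)

/-- `{0}` as a subspace of `ℝ`. -/
def zeroSpace : Type := ({(0 : ℝ)} : Set ℝ)

instance : TopologicalSpace zeroSpace := inferInstanceAs (TopologicalSpace ({(0:ℝ)} : Set ℝ))

/-- The inclusion `D^n × {0} → D^n × [0,1]`. -/
def cylIncl (n : ℕ) : gDisk n × zeroSpace → gDisk n × unitInterval :=
  fun p => (p.1, ⟨p.2.1, by
    rcases p.2 with ⟨x, hx⟩
    simp only [Set.mem_singleton_iff] at hx
    subst hx
    exact unitInterval.zero_mem⟩)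

lemma continuous_cylIncl (n : ℕ) : Continuous (cylIncl n) :=
  continuous_fst.prodMk (Continuous.subtype_mk (continuous_subtype_val.comp continuous_snd) _)

/-- The generating trivial cofibration `Glob(D^n × {0}) → Glob(D^n × [0,1])`. -/
def jFlow (n : ℕ) : DFlow.glob (gDisk n × zeroSpace) ⟶ DFlow.glob (gDisk n × unitInterval) :=
  DFlow.globMap (cylIncl n) (continuous_cylIncl n)

/-! ### Generating sets of maps, as morphism properties -/

/-- The set `I^gl = {c_n : Glob(S^{n-1}) → Glob(D^n) | n ≥ 0}`. -/
def Igl : MorphismProperty DFlow := fun X Y f =>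
  ∃ n : ℕ, X = DFlow.glob (gSphere n) ∧ Y = DFlow.glob (gDisk n) ∧ HEq f (cFlow n)

/-- The set `I^gl_{≥1} = {c_n | n ≥ 1}`. -/
def IglGeOne : MorphismProperty DFlow := fun X Y f =>
  ∃ n : ℕ, 1 ≤ n ∧ X = DFlow.glob (gSphere n) ∧ Y = DFlow.glob (gDisk n) ∧ HEq f (cFlow n)

/-- The set `J^gl`. -/
def Jgl : MorphismProperty DFlow := fun X Y f =>
  ∃ n : ℕ, X = DFlow.glob (gDisk n × zeroSpace) ∧ Y = DFlow.glob (gDisk n × unitInterval) ∧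
    HEq f (jFlow n)

/-- The singleton `{C}`. -/
def Cprop : MorphismProperty DFlow := fun X Y f =>
  X = emptyFlow ∧ Y = pointFlow ∧ HEq f Cmap

/-- The singleton `{R}`. -/
def Rprop : MorphismProperty DFlow := fun X Y f =>
  X = twoFlow ∧ Y = pointFlow ∧ HEq f Rmap

/-- The set `I^gl ∪ {C}`. -/
def IglC : MorphismProperty DFlow := fun _ _ f => Igl f ∨ Cprop f

/-- The set `I^gl ∪ {C, R}`, generating cofibrations of the q-model structure. -/
def IglCR : MorphismProperty DFlow := fun _ _ f => Igl f ∨ Cprop f ∨ Rprop f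

/-! ### Lifting properties, cofibration and injectivity classes -/

/-- `rlpClass S` is `inj(S)`: maps with the RLP with respect to every map of `S`. -/
def rlpClass {M : Type _} [Category M] (S : MorphismProperty M) : MorphismProperty M :=
  fun _ _ p => ∀ {A B : M} (i : A ⟶ B), S i → HasLiftingProperty i p

/-- `llpClass S`: maps with the LLP with respect to every map of `S`. -/
def llpClass {M : Type _} [Category M] (S : MorphismProperty M) : MorphismProperty M :=
  fun _ _ i => ∀ {A B : M} (p : A ⟶ B), S p → HasLiftingProperty i p

/-- `cofClass S` is `cof(S) = llp(inj(S))`. -/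
def cofClass {M : Type _} [Category M] (S : MorphismProperty M) : MorphismProperty M :=
  llpClass (rlpClass S)

/-! ### Model structures -/

/-- A model structure on a category, specified by its weak equivalences,
cofibrations and fibrations. -/
structure ModelStructure (M : Type _) [Category M] where
  W : MorphismProperty M
  C : MorphismProperty M
  F : MorphismProperty M
  w_comp : ∀ {X Y Z : M} (f : X ⟶ Y) (g : Y ⟶ Z), W f → W g → W (f ≫ g)
  w_cancel_left : ∀ {X Y Z : M} (f : X ⟶ Y) (g : Y ⟶ Z), W f → W (f ≫ g) → W g
  w_cancel_right : ∀ {X Y Z : M} (f : X ⟶ Y) (g : Y ⟶ Z), W g → W (f ≫ g) → W f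
  w_retract : ∀ {X Y X' Y' : M} (f : X ⟶ Y) (g : X' ⟶ Y') (iX : X ⟶ X') (rX : X' ⟶ X)
    (iY : Y ⟶ Y') (rY : Y' ⟶ Y), iX ≫ rX = 𝟙 X → iY ≫ rY = 𝟙 Y →
    iX ≫ g = f ≫ iY → g ≫ rY = rX ≫ f → W g → W f
  cof_eq : C = llpClass (fun _ _ p => F p ∧ W p)
  fib_eq : F = rlpClass (fun _ _ i => C i ∧ W i)
  factor_triv_cof : ∀ {X Y : M} (f : X ⟶ Y),
    ∃ (Z : M) (i : X ⟶ Z) (p : Z ⟶ Y), C i ∧ W i ∧ F p ∧ i ≫ p = f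
  factor_triv_fib : ∀ {X Y : M} (f : X ⟶ Y),
    ∃ (Z : M) (i : X ⟶ Z) (p : Z ⟶ Y), C i ∧ F p ∧ W p ∧ i ≫ p = f

/-! ### The class of weak equivalences `W̄_DK` -/

/-- A flow "is a set": it has no execution path. -/
def DFlow.IsSetFlow (X : DFlow) : Prop := ∀ α β : X.States, IsEmpty (X.Path α β)

/-- A flow has at least one execution path. -/
def DFlow.HasExecPath (X : DFlow) : Prop := ∃ α β : X.States, Nonempty (X.Path α β)

/-- The class `W̄_DK` of maps of flows. -/
def WbarDK : MorphismProperty DFlow := fun X Y _ =>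
  (IsEmpty X.States ∧ IsEmpty Y.States) ∨
  (Nonempty X.States ∧ Nonempty Y.States ∧ X.IsSetFlow ∧ Y.IsSetFlow) ∨
  (X.HasExecPath ∧ Y.HasExecPath)

/-! ### Binary coproducts of flows -/

/-- Path spaces of the coproduct of two flows. -/
def SumPath (X Y : DFlow) : X.States ⊕ Y.States → X.States ⊕ Y.States → Type
  | .inl a, .inl b => X.Path a b
  | .inr a, .inr b => Y.Path a b
  | _, _ => Empty

instance sumPathTop (X Y : DFlow) : ∀ a b, TopologicalSpace (SumPath X Y a b)
  | .inl a, .inl b => inferInstanceAs (TopologicalSpace (X.Path a b))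
  | .inr a, .inr b => inferInstanceAs (TopologicalSpace (Y.Path a b))
  | .inl _, .inr _ => ⊥
  | .inr _, .inl _ => ⊥

/-- The coproduct of two flows. -/
def DFlow.sum (X Y : DFlow) : DFlow where
  States := X.States ⊕ Y.States
  Path := SumPath X Y
  str := sumPathTop X Y
  comp {a b c} x y :=
    match a, b, c, x, y with
    | .inl _, .inl _, .inl _, x, y => X.comp x y
    | .inr _, .inr _, .inr _, x, y => Y.comp x y
    | .inl _, .inl _, .inr _, _, y => y.elim
    | .inl _, .inr _, _, x, _ => x.elim
    | .inr _, .inl _, _, x, _ => x.elim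
    | .inr _, .inr _, .inl _, _, y => y.elim
  continuous_comp a b c :=
    match a, b, c with
    | .inl _, .inl _, .inl _ => X.continuous_comp _ _ _
    | .inr _, .inr _, .inr _ => Y.continuous_comp _ _ _
    | .inl _, .inl _, .inr _ => continuous_of_isEmpty ⟨fun p => p.2.elim⟩ _
    | .inl _, .inr _, _ => continuous_of_isEmpty ⟨fun p => p.1.elim⟩ _
    | .inr _, .inl _, _ => continuous_of_isEmpty ⟨fun p => p.1.elim⟩ _
    | .inr _, .inr _, .inl _ => continuous_of_isEmpty ⟨fun p => p.2.elim⟩ _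
  assoc {a b c d} x y z :=
    match a, b, c, d, x, y, z with
    | .inl _, .inl _, .inl _, .inl _, x, y, z => X.assoc x y z
    | .inr _, .inr _, .inr _, .inr _, x, y, z => Y.assoc x y z
    | .inl _, .inl _, .inl _, .inr _, _, _, z => z.elim
    | .inl _, .inl _, .inr _, _, _, y, _ => y.elim
    | .inl _, .inr _, _, _, x, _, _ => x.elim
    | .inr _, .inl _, _, _, x, _, _ => x.elim
    | .inr _, .inr _, .inl _, _, _, y, _ => y.elim
    | .inr _, .inr _, .inr _, .inl _, _, _, z => z.elim

/-- The coproduct of two maps of flows. -/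
def DFlow.sumMap {X X' Y Y' : DFlow} (f : X ⟶ X') (g : Y ⟶ Y') : X.sum Y ⟶ X'.sum Y' where
  toFun := Sum.map f.toFun g.toFun
  map {a b} x :=
    match a, b, x with
    | .inl _, .inl _, x => f.map x
    | .inr _, .inr _, x => g.map x
    | .inl _, .inr _, x => x.elim
    | .inr _, .inl _, x => x.elim
  continuous_map a b :=
    match a, b with
    | .inl _, .inl _ => f.continuous_map _ _
    | .inr _, .inr _ => g.continuous_map _ _
    | .inl _, .inr _ => @continuous_of_isEmpty _ _ (DFlow.str _ _ _) (DFlow.str _ _ _) (inferInstanceAs (IsEmpty Empty)) _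
    | .inr _, .inl _ => @continuous_of_isEmpty _ _ (DFlow.str _ _ _) (DFlow.str _ _ _) (inferInstanceAs (IsEmpty Empty)) _
  map_comp {a b c} x y :=
    match a, b, c, x, y with
    | .inl _, .inl _, .inl _, x, y => f.map_comp x y
    | .inr _, .inr _, .inr _, x, y => g.map_comp x y
    | .inl _, .inl _, .inr _, _, y => y.elim
    | .inl _, .inr _, _, x, _ => x.elim
    | .inr _, .inl _, _, x, _ => x.elim
    | .inr _, .inr _, .inl _, _, y => y.elim

/-- The map `c₀⁺ = id_{I⃗} ⊔ c₀ : I⃗ ⊔ Glob(S^{-1}) → I⃗ ⊔ Glob(D⁰)`. -/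
def cZeroPlus : Iseg.sum (DFlow.glob (gSphere 0)) ⟶ Iseg.sum (DFlow.glob (gDisk 0)) :=
  DFlow.sumMap (𝟙 Iseg) (cFlow 0)

/-- The singleton `{C⁺}`. -/
def CplusProp : MorphismProperty DFlow := fun X Y f =>
  X = pointFlow ∧ Y = twoFlow ∧ HEq f Cplus

/-- The singleton `{c₀⁺}`. -/
def cZeroPlusProp : MorphismProperty DFlow := fun X Y f =>
  X = Iseg.sum (DFlow.glob (gSphere 0)) ∧ Y = Iseg.sum (DFlow.glob (gDisk 0)) ∧ HEq f cZeroPlus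

/-- The set `{C⁺, c₀⁺} ∪ J^gl ∪ I^gl_{≥1}`. -/
def TrivCofGen : MorphismProperty DFlow := fun _ _ f =>
  CplusProp f ∨ cZeroPlusProp f ∨ Jgl f ∨ IglGeOne f

/-- A topological space is "trivially fibrant over the point": it is nonempty and
every continuous map `S^{n-1} → P` (`n ≥ 1`) extends over `D^n`. -/
def TrivFibOverPoint (P : Type) [TopologicalSpace P] : Prop :=
  Nonempty P ∧
    ∀ n : ℕ, 1 ≤ n → ∀ g : C(gSphere n, P),
      ∃ G : C(gDisk n, P), ∀ z : gSphere n, G (sphereIncl n z) = g z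

/-!
Fibrations are the maps with the right lifting property against `cof(I^gl ∪ {C}) ∩ W̄_DK`. The
maps `c₀⁺ = id_{I⃗} ⊔ c₀` and `c_n` (`n ≥ 1`) are trivial cofibrations: lifting against `c₀⁺`
shows that a fibrant flow with one execution path has all its path spaces nonempty, and lifting
against `c_n` that they have no homotopy. Conversely such a flow is in `inj(I^gl ∪ {C})`, hence
fibrant; a set flow is fibrant because a trivial cofibration between sets only asks for a map of
states, which is obtained by lifting against the codiscrete flow on its states. The directed
segment has an execution path but `ℙ_{0,0} = ∅`, so it is not fibrant.

A map `p : E → D` in `inj(I^gl ∪ {C})` is surjective on states. Pulling it back along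
`g : X → D` over a section of states gives a map to `X` which is bijective on states and still
has the lifting property against every `c_n`, hence lies in `inj(I^gl ∪ {C, R})`. A q-cofibrant
`X` therefore has a section of it, which composed with the projection to `E` lifts `g` through `p`.
-/

namespace FlowHom

variable {X Y : DFlow}

theorem hext {f g : X ⟶ Y} (h₁ : f.toFun = g.toFun)
    (h₂ : ∀ (α β : X.States) (p : X.Path α β), HEq (f.map p) (g.map p)) : f = g := by
  obtain ⟨f₁, f₂, _, _⟩ := f
  obtain ⟨g₁, g₂, _, _⟩ := g
  obtain rfl : f₁ = g₁ := h₁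
  obtain rfl : @f₂ = @g₂ := by
    funext α β p
    exact eq_of_heq (h₂ α β p)
  rfl

theorem congr_toFun {f g : X ⟶ Y} (h : f = g) (a : X.States) : f.toFun a = g.toFun a := by
  rw [h]

theorem congr_map_heq {f g : X ⟶ Y} (h : f = g) {α β : X.States} (p : X.Path α β) :
    HEq (f.map p) (g.map p) := by
  rw [h]

theorem map_heq_map (f : X ⟶ Y) {α β α' β' : X.States} (hα : α = α') (hβ : β = β')
    {p : X.Path α β} {p' : X.Path α' β'} (h : HEq p p') : HEq (f.map p) (f.map p') := by
  subst hα hβ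
  rw [eq_of_heq h]

theorem ext_of_isSetFlow (hX : X.IsSetFlow) {f g : X ⟶ Y} (h : f.toFun = g.toFun) : f = g :=
  hext h fun α β p => ((hX α β).false p).elim

theorem ext_of_isEmpty [IsEmpty X.States] (f g : X ⟶ Y) : f = g :=
  hext (funext isEmptyElim) fun α => isEmptyElim α

end FlowHom

instance (X : DFlow) : Subsingleton (X ⟶ terminalFlow) :=
  ⟨fun _ _ => FlowHom.hext (funext fun _ => rfl) fun _ _ _ => HEq.rfl⟩

instance : IsEmpty emptyFlow.States := inferInstanceAs (IsEmpty Empty)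

namespace DFlow

theorem comp_heq_comp (X : DFlow) {α β γ α' β' γ' : X.States}
    (hα : α = α') (hβ : β = β') (hγ : γ = γ')
    {x : X.Path α β} {y : X.Path β γ} {x' : X.Path α' β'} {y' : X.Path β' γ'}
    (hx : HEq x x') (hy : HEq y y') : HEq (X.comp x y) (X.comp x' y') := by
  subst hα hβ hγ
  rw [eq_of_heq hx, eq_of_heq hy]

def pathCast (X : DFlow) {α β α' β' : X.States} (hα : α = α') (hβ : β = β') :
    C(X.Path α β, X.Path α' β') := by
  subst hα hβ
  exact ContinuousMap.id _

theorem pathCast_heq (X : DFlow) {α β α' β' : X.States} (hα : α = α') (hβ : β = β')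
    (p : X.Path α β) : HEq (X.pathCast hα hβ p) p := by
  subst hα hβ
  rfl

theorem not_isSetFlow_iff (X : DFlow) :
    ¬ X.IsSetFlow ↔ ∃ α β : X.States, Nonempty (X.Path α β) := by
  simp only [IsSetFlow, not_forall, not_isEmpty_iff]

/-- Instance search does not find the topology of `X.Path α β` for a concrete flow `X` such as
`glob Z`; stating this for an arbitrary flow lets unification supply it. -/
theorem continuous_of_isEmpty_path {X : DFlow} {Y : Type} [TopologicalSpace Y] {α β : X.States}
    (h : IsEmpty (X.Path α β)) (f : X.Path α β → Y) : Continuous f :=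
  continuous_of_isEmpty h f

theorem isSetFlow_ofSet (S : Type) : (ofSet S).IsSetFlow :=
  fun _ _ => inferInstanceAs (IsEmpty Empty)

theorem isSetFlow_of_isEmpty (X : DFlow) [IsEmpty X.States] : X.IsSetFlow :=
  fun α => isEmptyElim α

def homOfIsSetFlow {X Y : DFlow} (hX : X.IsSetFlow) (f : X.States → Y.States) : X ⟶ Y where
  toFun := f
  map p := ((hX _ _).false p).elim
  continuous_map α β := continuous_of_isEmpty_path (hX α β) _
  map_comp x _ := ((hX _ _).false x).elim

end DFlow

open DFlow

/-! ### Maps out of globes -/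

def globHomMk {Z : Type} [TopologicalSpace Z] {X : DFlow} (α β : X.States)
    (g : C(Z, X.Path α β)) : DFlow.glob Z ⟶ X where
  toFun b := bif b then β else α
  map {a b} x :=
    match a, b, x with
    | false, true, x => g x
    | false, false, x => x.elim
    | true, false, x => x.elim
    | true, true, x => x.elim
  continuous_map a b :=
    match a, b with
    | false, true => g.continuous
    | false, false => continuous_of_isEmpty_path (inferInstanceAs (IsEmpty Empty)) _
    | true, false => continuous_of_isEmpty_path (inferInstanceAs (IsEmpty Empty)) _
    | true, true => continuous_of_isEmpty_path (inferInstanceAs (IsEmpty Empty)) _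
  map_comp {a b c} x y :=
    match a, b, c, x, y with
    | false, false, _, x, _ => x.elim
    | false, true, false, _, y => y.elim
    | false, true, true, _, y => y.elim
    | true, _, _, x, _ => x.elim

def globPath {Z : Type} [TopologicalSpace Z] (z : Z) : (DFlow.glob Z).Path false true := z

theorem glob_hom_ext {Z : Type} [TopologicalSpace Z] {X : DFlow} {f g : DFlow.glob Z ⟶ X}
    (h₀ : f.toFun false = g.toFun false) (h₁ : f.toFun true = g.toFun true)
    (h : ∀ z : Z, HEq (f.map (globPath z)) (g.map (globPath z))) : f = g := by
  refine FlowHom.hext (funext fun b => ?_) fun a b q => ?_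
  · cases b
    exacts [h₀, h₁]
  · match a, b, q with
    | false, true, q => exact h q
    | false, false, q => exact q.elim
    | true, false, q => exact q.elim
    | true, true, q => exact q.elim

def globHomPaths {Z : Type} [TopologicalSpace Z] {X : DFlow} (f : DFlow.glob Z ⟶ X) :
    C(Z, X.Path (f.toFun false) (f.toFun true)) :=
  ⟨fun z => f.map (globPath z), f.continuous_map false true⟩

/-! ### Maps out of binary coproducts -/

namespace DFlow

variable {A A' B B' X : DFlow}

def sumInl (A B : DFlow) : A ⟶ A.sum B where
  toFun := .inl
  map x := x
  continuous_map _ _ := continuous_id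
  map_comp _ _ := rfl

def sumInr (A B : DFlow) : B ⟶ A.sum B where
  toFun := .inr
  map x := x
  continuous_map _ _ := continuous_id
  map_comp _ _ := rfl

def sumDesc (f : A ⟶ X) (g : B ⟶ X) : A.sum B ⟶ X where
  toFun := Sum.elim f.toFun g.toFun
  map {a b} x :=
    match a, b, x with
    | .inl _, .inl _, x => f.map x
    | .inr _, .inr _, x => g.map x
    | .inl _, .inr _, x => x.elim
    | .inr _, .inl _, x => x.elim
  continuous_map a b :=
    match a, b with
    | .inl _, .inl _ => f.continuous_map _ _
    | .inr _, .inr _ => g.continuous_map _ _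
    | .inl _, .inr _ => continuous_of_isEmpty_path (inferInstanceAs (IsEmpty Empty)) _
    | .inr _, .inl _ => continuous_of_isEmpty_path (inferInstanceAs (IsEmpty Empty)) _
  map_comp {a b c} x y :=
    match a, b, c, x, y with
    | .inl _, .inl _, .inl _, x, y => f.map_comp x y
    | .inr _, .inr _, .inr _, x, y => g.map_comp x y
    | .inl _, .inl _, .inr _, _, y => y.elim
    | .inl _, .inr _, _, x, _ => x.elim
    | .inr _, .inl _, _, x, _ => x.elim
    | .inr _, .inr _, .inl _, _, y => y.elim

theorem sumInl_sumDesc (f : A ⟶ X) (g : B ⟶ X) : sumInl A B ≫ sumDesc f g = f := rfl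

theorem sumInr_sumDesc (f : A ⟶ X) (g : B ⟶ X) : sumInr A B ≫ sumDesc f g = g := rfl

theorem sumInl_sumMap (f : A ⟶ A') (g : B ⟶ B') :
    sumInl A B ≫ sumMap f g = f ≫ sumInl A' B' := rfl

theorem sumInr_sumMap (f : A ⟶ A') (g : B ⟶ B') :
    sumInr A B ≫ sumMap f g = g ≫ sumInr A' B' := rfl

theorem sum_hom_ext {f g : A.sum B ⟶ X} (hl : sumInl A B ≫ f = sumInl A B ≫ g)
    (hr : sumInr A B ≫ f = sumInr A B ≫ g) : f = g := by
  refine FlowHom.hext (funext fun a => ?_) fun a b q => ?_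
  · cases a with
    | inl a => exact FlowHom.congr_toFun hl a
    | inr b => exact FlowHom.congr_toFun hr b
  · match a, b, q with
    | .inl _, .inl _, q => exact FlowHom.congr_map_heq hl q
    | .inr _, .inr _, q => exact FlowHom.congr_map_heq hr q
    | .inl _, .inr _, q => exact q.elim
    | .inr _, .inl _, q => exact q.elim

theorem sumMap_sumDesc (f : A ⟶ A') (g : B ⟶ B') (f' : A' ⟶ X) (g' : B' ⟶ X) :
    sumMap f g ≫ sumDesc f' g' = sumDesc (f ≫ f') (g ≫ g') :=
  sum_hom_ext rfl rfl

end DFlow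

def codisc (S : Type) : DFlow where
  States := S
  Path _ _ := PUnit
  str _ _ := ⊥
  comp _ _ := PUnit.unit
  continuous_comp _ _ _ := continuous_const
  assoc _ _ _ := rfl

def codiscHom {X : DFlow} {S : Type} (f : X.States → S) : X ⟶ codisc S where
  toFun := f
  map _ := PUnit.unit
  continuous_map _ _ := @continuous_const _ _ _ ((codisc S).str _ _) _
  map_comp _ _ := rfl

/-! ### Right lifting properties against the generators -/

section Lifting

theorem mem_cofClass_of_mem {M : Type*} [Category M] {S : MorphismProperty M} {A B : M}
    {f : A ⟶ B} (hf : S f) : cofClass S f :=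
  fun _ hp => hp f hf

theorem cofClass_mono {M : Type*} [Category M] {S T : MorphismProperty M}
    (hST : ∀ {A B : M} (f : A ⟶ B), S f → T f) {A B : M} {f : A ⟶ B} (hf : cofClass S f) :
    cofClass T f :=
  fun p hp => hf p fun i hi => hp i (hST i hi)

variable {E D : DFlow}

theorem hasLiftingProperty_Cmap_iff (p : E ⟶ D) :
    HasLiftingProperty Cmap p ↔ Function.Surjective p.toFun := by
  constructor
  · intro _ d
    let v : pointFlow ⟶ D := homOfIsSetFlow (isSetFlow_ofSet _) fun _ => d
    have sq : CommSq E.fromEmpty Cmap p v := ⟨FlowHom.ext_of_isEmpty _ _⟩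
    exact ⟨sq.lift.toFun PUnit.unit, FlowHom.congr_toFun sq.fac_right PUnit.unit⟩
  · intro hp
    refine ⟨fun {_ v} _ => ⟨⟨⟨homOfIsSetFlow (isSetFlow_ofSet _)
      fun _ => (hp (v.toFun PUnit.unit)).choose, FlowHom.ext_of_isEmpty _ _, ?_⟩⟩⟩⟩
    exact FlowHom.ext_of_isSetFlow (isSetFlow_ofSet _)
      (funext fun _ => (hp (v.toFun PUnit.unit)).choose_spec)

theorem hasLiftingProperty_Rmap_of_injective (p : E ⟶ D) (hp : Function.Injective p.toFun) :
    HasLiftingProperty Rmap p := by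
  refine ⟨fun {u v} sq => ?_⟩
  have hu : ∀ b, p.toFun (u.toFun b) = v.toFun PUnit.unit := FlowHom.congr_toFun sq.w
  refine ⟨⟨⟨homOfIsSetFlow (isSetFlow_ofSet _) fun _ => u.toFun false, ?_, ?_⟩⟩⟩
  · exact FlowHom.ext_of_isSetFlow (isSetFlow_ofSet _)
      (funext fun b => hp ((hu false).trans (hu b).symm))
  · exact FlowHom.ext_of_isSetFlow (isSetFlow_ofSet _) (funext fun _ => hu false)

theorem hasLiftingProperty_globMap_toTerminal_iff {Z W : Type} [TopologicalSpace Z]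
    [TopologicalSpace W] (f : Z → W) (hf : Continuous f) (X : DFlow) :
    HasLiftingProperty (DFlow.globMap f hf) X.toTerminal ↔
      ∀ (α β : X.States) (g : C(Z, X.Path α β)),
        ∃ G : C(W, X.Path α β), ∀ z, G (f z) = g z := by
  constructor
  · intro _ α β g
    have sq : CommSq (globHomMk α β g) (DFlow.globMap f hf) X.toTerminal
        (DFlow.glob W).toTerminal := ⟨Subsingleton.elim _ _⟩
    have h₀ : sq.lift.toFun false = α := FlowHom.congr_toFun sq.fac_left false
    have h₁ : sq.lift.toFun true = β := FlowHom.congr_toFun sq.fac_left true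
    refine ⟨(X.pathCast h₀ h₁).comp (globHomPaths sq.lift), fun z => eq_of_heq ?_⟩
    exact (X.pathCast_heq h₀ h₁ _).trans (FlowHom.congr_map_heq sq.fac_left (globPath z))
  · refine fun h => ⟨fun {u _} _ => ?_⟩
    obtain ⟨G, hG⟩ := h _ _ (globHomPaths u)
    refine ⟨⟨⟨globHomMk _ _ G, ?_, Subsingleton.elim _ _⟩⟩⟩
    exact glob_hom_ext rfl rfl fun z => heq_of_eq (hG z)

theorem rlpClass_IglC_of {p : E ⟶ D} (hc : ∀ n, HasLiftingProperty (cFlow n) p)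
    (hC : HasLiftingProperty Cmap p) : rlpClass IglC p := by
  rintro _ _ i (⟨n, rfl, rfl, hi⟩ | ⟨rfl, rfl, hi⟩) <;> obtain rfl := eq_of_heq hi
  exacts [hc n, hC]

theorem rlpClass_IglCR_of {p : E ⟶ D} (hc : ∀ n, HasLiftingProperty (cFlow n) p)
    (hC : HasLiftingProperty Cmap p) (hR : HasLiftingProperty Rmap p) : rlpClass IglCR p := by
  rintro _ _ i (⟨n, rfl, rfl, hi⟩ | ⟨rfl, rfl, hi⟩ | ⟨rfl, rfl, hi⟩) <;> obtain rfl := eq_of_heq hi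
  exacts [hc n, hC, hR]

theorem hasLiftingProperty_sumMap_id (A : DFlow) {B B' : DFlow} (i : B ⟶ B') (p : E ⟶ D)
    [HasLiftingProperty i p] : HasLiftingProperty (sumMap (𝟙 A) i) p := by
  refine ⟨fun {u v} sq => ?_⟩
  have sq' : CommSq (sumInr A B ≫ u) i p (sumInr A B' ≫ v) := ⟨by
    rw [Category.assoc, sq.w, ← Category.assoc, sumInr_sumMap, Category.assoc]⟩
  refine ⟨⟨⟨sumDesc (sumInl A B ≫ u) sq'.lift, ?_, ?_⟩⟩⟩
  · rw [sumMap_sumDesc, Category.id_comp, sq'.fac_left]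
    exact sum_hom_ext rfl rfl
  · refine sum_hom_ext ?_ ?_
    · rw [← Category.assoc, sumInl_sumDesc, Category.assoc, sq.w, ← Category.assoc,
        sumInl_sumMap, Category.id_comp]
    · rw [← Category.assoc, sumInr_sumDesc, sq'.fac_right]

theorem cofClass_sumMap_id {S : MorphismProperty DFlow} (A : DFlow) {B B' : DFlow}
    {i : B ⟶ B'} (hi : cofClass S i) : cofClass S (sumMap (𝟙 A) i) :=
  fun p hp => have := hi p hp; hasLiftingProperty_sumMap_id A i p

end Lifting

/-! ### Fibrant flows -/

instance : IsEmpty (gSphere 0) :=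
  ⟨fun ⟨z, hz⟩ => by simp [Subsingleton.elim z 0] at hz⟩

theorem gDisk_nonempty (n : ℕ) : Nonempty (gDisk n) :=
  ⟨⟨0, by simp⟩⟩

theorem gSphere_nonempty {n : ℕ} (hn : 1 ≤ n) : Nonempty (gSphere n) :=
  ⟨⟨EuclideanSpace.single ⟨0, hn⟩ 1, by simp⟩⟩

theorem TrivFibOverPoint.exists_extension {P : Type} [TopologicalSpace P]
    (h : TrivFibOverPoint P) (n : ℕ) (g : C(gSphere n, P)) :
    ∃ G : C(gDisk n, P), ∀ z, G (sphereIncl n z) = g z := by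
  rcases Nat.eq_zero_or_pos n with rfl | hn
  · exact ⟨.const _ h.1.some, isEmptyElim⟩
  · exact h.2 n hn g

theorem toTerminal_mem_rlpClass_IglC {X : DFlow} (hX : Nonempty X.States)
    (h : ∀ α β : X.States, TrivFibOverPoint (X.Path α β)) : rlpClass IglC X.toTerminal :=
  rlpClass_IglC_of
    (fun n => (hasLiftingProperty_globMap_toTerminal_iff _ _ X).2 fun α β =>
      (h α β).exists_extension n)
    ((hasLiftingProperty_Cmap_iff _).2 fun _ => ⟨hX.some, rfl⟩)

theorem codisc_toTerminal_mem_rlpClass_IglC {S : Type} (hS : Nonempty S) :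
    rlpClass IglC (codisc S).toTerminal :=
  toTerminal_mem_rlpClass_IglC hS fun _ _ =>
    ⟨⟨PUnit.unit⟩, fun _ _ _ => ⟨.const _ PUnit.unit, fun _ => rfl⟩⟩

theorem cFlow_mem_cofClass (n : ℕ) : cofClass IglC (cFlow n) :=
  mem_cofClass_of_mem (Or.inl ⟨n, rfl, rfl, HEq.rfl⟩)

theorem cFlow_mem_WbarDK {n : ℕ} (hn : 1 ≤ n) : WbarDK (cFlow n) :=
  have ⟨z⟩ := gSphere_nonempty hn
  Or.inr (Or.inr ⟨⟨false, true, ⟨globPath z⟩⟩, ⟨false, true, ⟨globPath (sphereIncl n z)⟩⟩⟩)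

theorem cZeroPlus_mem_cofClass : cofClass IglC cZeroPlus :=
  cofClass_sumMap_id Iseg (cFlow_mem_cofClass 0)

theorem cZeroPlus_mem_WbarDK : WbarDK cZeroPlus :=
  Or.inr (Or.inr ⟨⟨.inl false, .inl true, ⟨globPath (Z := PUnit) PUnit.unit⟩⟩,
    ⟨.inl false, .inl true, ⟨globPath (Z := PUnit) PUnit.unit⟩⟩⟩)

theorem hasLiftingProperty_toTerminal_of_isSetFlow {X A B : DFlow} (hX : X.IsSetFlow)
    (i : A ⟶ B) (hi : cofClass IglC i) (hw : WbarDK i) : HasLiftingProperty i X.toTerminal := by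
  refine ⟨fun {u _} _ => ?_⟩
  rcases hw with ⟨_, _⟩ | ⟨⟨a⟩, -, hA, hB⟩ | ⟨⟨a, b, ⟨q⟩⟩, -⟩
  · exact ⟨⟨⟨homOfIsSetFlow (isSetFlow_of_isEmpty B) isEmptyElim,
      FlowHom.ext_of_isEmpty _ _, Subsingleton.elim _ _⟩⟩⟩
  · have := hi _ (codisc_toTerminal_mem_rlpClass_IglC ⟨u.toFun a⟩)
    have sq : CommSq (codiscHom u.toFun) i (codisc X.States).toTerminal B.toTerminal :=
      ⟨Subsingleton.elim _ _⟩
    exact ⟨⟨⟨homOfIsSetFlow hB sq.lift.toFun,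
      FlowHom.ext_of_isSetFlow hA (funext fun a => FlowHom.congr_toFun sq.fac_left a),
      Subsingleton.elim _ _⟩⟩⟩
  · exact ((hX _ _).false (u.map q)).elim

theorem nonempty_path_of_hasLiftingProperty_cZeroPlus {X : DFlow}
    [HasLiftingProperty cZeroPlus X.toTerminal] {α₀ β₀ : X.States} (e : X.Path α₀ β₀)
    (α β : X.States) : Nonempty (X.Path α β) := by
  let u : Iseg.sum (DFlow.glob (gSphere 0)) ⟶ X := sumDesc (globHomMk α₀ β₀ (.const _ e))
    (globHomMk α β ⟨isEmptyElim, continuous_of_isEmpty inferInstance _⟩)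
  have sq : CommSq u cZeroPlus X.toTerminal (Iseg.sum (DFlow.glob (gDisk 0))).toTerminal :=
    ⟨Subsingleton.elim _ _⟩
  have h₀ : sq.lift.toFun (.inr false) = α := FlowHom.congr_toFun sq.fac_left (.inr false)
  have h₁ : sq.lift.toFun (.inr true) = β := FlowHom.congr_toFun sq.fac_left (.inr true)
  obtain ⟨d⟩ := gDisk_nonempty 0
  exact ⟨X.pathCast h₀ h₁ (globHomPaths (sumInr _ _ ≫ sq.lift) d)⟩

theorem toTerminal_mem_rlpClass_trivCof_iff (X : DFlow) :
    rlpClass (fun _ _ i => cofClass IglC i ∧ WbarDK i) X.toTerminal ↔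
      X.IsSetFlow ∨ ∀ α β : X.States, TrivFibOverPoint (X.Path α β) := by
  constructor
  · refine fun h => or_iff_not_imp_left.2 fun hX α β => ?_
    obtain ⟨α₀, β₀, ⟨e⟩⟩ := (not_isSetFlow_iff X).1 hX
    have := h cZeroPlus ⟨cZeroPlus_mem_cofClass, cZeroPlus_mem_WbarDK⟩
    refine ⟨nonempty_path_of_hasLiftingProperty_cZeroPlus e α β, fun n hn => ?_⟩
    have := h (cFlow n) ⟨cFlow_mem_cofClass n, cFlow_mem_WbarDK hn⟩
    exact (hasLiftingProperty_globMap_toTerminal_iff _ _ X).1 this α β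
  · rintro hX _ _ i ⟨hi, hw⟩
    by_cases hset : X.IsSetFlow
    · exact hasLiftingProperty_toTerminal_of_isSetFlow hset i hi hw
    · obtain ⟨α, -, -⟩ := (not_isSetFlow_iff X).1 hset
      exact hi _ (toTerminal_mem_rlpClass_IglC ⟨α⟩ (hX.resolve_left hset))

theorem Iseg_not_isSetFlow_or_trivFib :
    ¬ (Iseg.IsSetFlow ∨ ∀ α β : Iseg.States, TrivFibOverPoint (Iseg.Path α β)) := by
  rintro (h | h)
  · exact (h false true).false (globPath (Z := PUnit) PUnit.unit)
  · exact (h false false).1.some.elim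

/-! ### Cofibrant flows -/

section SectionPullback

variable {X E D : DFlow} (p : E ⟶ D) (g : X ⟶ D) (s : X.States → E.States)
  (hs : ∀ x, p.toFun (s x) = g.toFun x)

def sectionPullbackPath (x y : X.States) : Type :=
  {q : X.Path x y × E.Path (s x) (s y) // HEq (p.map q.2) (g.map q.1)}

instance (x y : X.States) : TopologicalSpace (sectionPullbackPath p g s x y) :=
  instTopologicalSpaceSubtype

/-- The pullback of `p` along `g`, with its states cut down to the graph of the section `s`,
so that the projection to `X` is bijective on states. -/
def sectionPullback : DFlow where
  States := X.States
  Path := sectionPullbackPath p g s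
  str _ _ := inferInstance
  comp {x y z} q r := ⟨(X.comp q.1.1 r.1.1, E.comp q.1.2 r.1.2), by
    rw [p.map_comp, g.map_comp]
    exact D.comp_heq_comp (hs x) (hs y) (hs z) q.2 r.2⟩
  continuous_comp x y z := by
    refine Continuous.subtype_mk (Continuous.prodMk ?_ ?_) _
    · exact (X.continuous_comp x y z).comp
        ((continuous_fst.comp (continuous_subtype_val.comp continuous_fst)).prodMk
          (continuous_fst.comp (continuous_subtype_val.comp continuous_snd)))
    · exact (E.continuous_comp _ _ _).comp
        ((continuous_snd.comp (continuous_subtype_val.comp continuous_fst)).prodMk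
          (continuous_snd.comp (continuous_subtype_val.comp continuous_snd)))
  assoc _ _ _ := Subtype.ext (Prod.ext (X.assoc _ _ _) (E.assoc _ _ _))

namespace sectionPullback

def fst : sectionPullback p g s hs ⟶ X where
  toFun x := x
  map q := q.1.1
  continuous_map x y :=
    -- `x y` are states of `sectionPullback`, so the instances on `X.Path x y` must be given
    letI := X.str x y
    letI := E.str (s x) (s y)
    continuous_fst.comp continuous_subtype_val
  map_comp _ _ := rfl

def snd : sectionPullback p g s hs ⟶ E where
  toFun := s
  map q := q.1.2
  continuous_map x y :=
    letI := X.str x y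
    letI := E.str (s x) (s y)
    continuous_snd.comp continuous_subtype_val
  map_comp _ _ := rfl

theorem condition : fst p g s hs ≫ g = snd p g s hs ≫ p :=
  FlowHom.hext (funext fun x => (hs x).symm) fun _ _ q => q.2.symm

theorem path_hext {x y x' y' : X.States} (hx : x = x') (hy : y = y')
    {q : sectionPullbackPath p g s x y} {q' : sectionPullbackPath p g s x' y'}
    (h₁ : HEq q.1.1 q'.1.1) (h₂ : HEq q.1.2 q'.1.2) : HEq q q' := by
  subst hx hy
  exact heq_of_eq (Subtype.ext (Prod.ext (eq_of_heq h₁) (eq_of_heq h₂)))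

variable {p g s hs} {A : DFlow}

def lift (a : A ⟶ X) (b : A ⟶ E) (hb : ∀ x, b.toFun x = s (a.toFun x))
    (hab : a ≫ g = b ≫ p) : A ⟶ sectionPullback p g s hs where
  toFun := a.toFun
  map q := ⟨(a.map q, E.pathCast (hb _) (hb _) (b.map q)),
    (p.map_heq_map (hb _).symm (hb _).symm (E.pathCast_heq _ _ _)).trans
      (FlowHom.congr_map_heq hab q).symm⟩
  continuous_map α β := Continuous.subtype_mk ((a.continuous_map α β).prodMk
    ((E.pathCast _ _).continuous.comp (b.continuous_map α β))) _
  map_comp x y := Subtype.ext (Prod.ext (a.map_comp x y) (eq_of_heq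
    (((E.pathCast_heq _ _ _).trans (heq_of_eq (b.map_comp x y))).trans
      (E.comp_heq_comp (hb _) (hb _) (hb _) (E.pathCast_heq _ _ _).symm
        (E.pathCast_heq _ _ _).symm))))

theorem lift_fst (a : A ⟶ X) (b : A ⟶ E) (hb : ∀ x, b.toFun x = s (a.toFun x))
    (hab : a ≫ g = b ≫ p) : lift a b hb hab ≫ fst p g s hs = a :=
  rfl

theorem lift_snd (a : A ⟶ X) (b : A ⟶ E) (hb : ∀ x, b.toFun x = s (a.toFun x))
    (hab : a ≫ g = b ≫ p) : lift a b hb hab ≫ snd p g s hs = b :=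
  FlowHom.hext (funext fun x => (hb x).symm) fun _ _ _ => E.pathCast_heq _ _ _

theorem hom_ext {f f' : A ⟶ sectionPullback p g s hs} (h₁ : f ≫ fst p g s hs = f' ≫ fst p g s hs)
    (h₂ : f ≫ snd p g s hs = f' ≫ snd p g s hs) : f = f' :=
  FlowHom.hext (funext fun a => FlowHom.congr_toFun h₁ a) fun α β q =>
    path_hext p g s (FlowHom.congr_toFun h₁ α) (FlowHom.congr_toFun h₁ β)
      (FlowHom.congr_map_heq h₁ q) (FlowHom.congr_map_heq h₂ q)

/-- A lift against `p` passes through the section `s` on the image of `i`, hence everywhere when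
`i` is surjective on states. -/
theorem fst_hasLiftingProperty {B : DFlow} (i : A ⟶ B) (hi : Function.Surjective i.toFun)
    [HasLiftingProperty i p] : HasLiftingProperty i (fst p g s hs) := by
  refine ⟨fun {u v} sq => ?_⟩
  have sq' : CommSq (u ≫ snd p g s hs) i p (v ≫ g) := ⟨by
    rw [Category.assoc, ← condition, ← Category.assoc, sq.w, Category.assoc]⟩
  have hb : ∀ b, sq'.lift.toFun b = s (v.toFun b) := by
    intro b
    obtain ⟨a, rfl⟩ := hi b
    change _ = s ((i ≫ v).toFun a)
    rw [← FlowHom.congr_toFun sq.w a]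
    exact FlowHom.congr_toFun sq'.fac_left a
  refine ⟨⟨⟨lift v sq'.lift hb sq'.fac_right.symm, ?_, lift_fst _ _ _ _⟩⟩⟩
  refine hom_ext ?_ ?_
  · rw [Category.assoc, lift_fst, sq.w]
  · rw [Category.assoc, lift_snd, sq'.fac_left]

theorem fst_mem_rlpClass_IglCR (hp : rlpClass IglC p) : rlpClass IglCR (fst p g s hs) :=
  rlpClass_IglCR_of
    (fun n => have := hp (cFlow n) (Or.inl ⟨n, rfl, rfl, HEq.rfl⟩)
      fst_hasLiftingProperty (cFlow n) Function.surjective_id)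
    ((hasLiftingProperty_Cmap_iff _).2 Function.surjective_id)
    (hasLiftingProperty_Rmap_of_injective _ Function.injective_id)

end sectionPullback

end SectionPullback

theorem cofClass_IglC_fromEmpty_iff (X : DFlow) :
    cofClass IglC X.fromEmpty ↔ cofClass IglCR X.fromEmpty := by
  refine ⟨cofClass_mono fun _ hf => hf.imp_right Or.inl, fun h {E D} p hp => ⟨fun {_ g} _ => ?_⟩⟩
  have hsurj := (hasLiftingProperty_Cmap_iff p).1 (hp Cmap (Or.inr ⟨rfl, rfl, HEq.rfl⟩))
  choose s hs using fun x => hsurj (g.toFun x)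
  have := h (sectionPullback.fst p g s hs) (sectionPullback.fst_mem_rlpClass_IglCR hp)
  have sq : CommSq (sectionPullback p g s hs).fromEmpty X.fromEmpty
      (sectionPullback.fst p g s hs) (𝟙 X) := ⟨FlowHom.ext_of_isEmpty _ _⟩
  refine ⟨⟨⟨sq.lift ≫ sectionPullback.snd p g s hs, FlowHom.ext_of_isEmpty _ _, ?_⟩⟩⟩
  rw [Category.assoc, ← sectionPullback.condition, ← Category.assoc, sq.fac_right,
    Category.id_comp]

/-- in the model structure on `Flow` with cofibrations
`cof(I^gl ∪ {C})` and weak equivalences `W̄_DK`, a flow `X` is fibrant if and only if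
either `ℙX = ∅`, or all the spaces `ℙ_{α,β}X` are nonempty with vanishing homotopy
(trivially fibrant over the point); in particular not all flows are fibrant. Moreover,
the cofibrant objects are exactly the q-cofibrant flows, those `X` with
`∅ → X ∈ cof(I^gl ∪ {C, R})`. -/
theorem fibrant_and_cofibrant_characterization
    (MS : ModelStructure DFlow) (hC : MS.C = cofClass IglC) (hW : MS.W = WbarDK) :
    (∀ X : DFlow,
      MS.F X.toTerminal ↔
        (X.IsSetFlow ∨ ∀ α β : X.States, TrivFibOverPoint (X.Path α β))) ∧
    (∃ X : DFlow, ¬ MS.F X.toTerminal) ∧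
    (∀ X : DFlow, MS.C X.fromEmpty ↔ cofClass IglCR X.fromEmpty) := by
  have fibrant_iff (X : DFlow) : MS.F X.toTerminal ↔
      rlpClass (fun _ _ i => cofClass IglC i ∧ WbarDK i) X.toTerminal := by
    rw [MS.fib_eq, hC, hW]
  refine ⟨fun X => (fibrant_iff X).trans (toTerminal_mem_rlpClass_trivCof_iff X), ?_, ?_⟩
  · refine ⟨Iseg, fun h => Iseg_not_isSetFlow_or_trivFib ?_⟩
    exact (toTerminal_mem_rlpClass_trivCof_iff Iseg).1 ((fibrant_iff Iseg).1 h)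
  · intro X
    rw [hC]
    exact cofClass_IglC_fromEmpty_iff X
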